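/- arXiv:2107.09776 — 3 statements merged into one kernel-verified Lean document; each statement's English description precedes it below -/
import Mathlib

section
/- In the elliptic case (a > 0, Δ < 0) with 0 < c < a, the branch maps f_s(x) = (-b x + s√(Δ x² + 4a))/(2a), s = ±1, map the interval B = [-2√(c/|Δ|), 2√(c/|Δ|)] into itself. -/
/-!
Write `t = √(c / |Δ|)`, so that `t² (4ac - b²) = c` and `B = [-2t, 2t]`. Completing the square gives
`(4at - bx)² - (Δx² + 4a) = 4a (bt - cx)² / c ≥ 0`, hence `√(Δx² + 4a) ≤ 4at - |bx|` as soon as the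
right side is nonnegative; on `B` it is, because `b² < 4ac < 4a²` forces `|b| < 2a`. Then
`|-bx ± √(Δx² + 4a)| ≤ |bx| + √(Δx² + 4a) ≤ 4at`, i.e. both branches land in `[-2t, 2t]`.
-/

open Real

section EllipticBranch

variable {a b c t x : ℝ}

lemma abs_lt_two_mul_of_sq_lt (ha : 0 ≤ a) (hca : c ≤ a) (h : b ^ 2 < 4 * a * c) : |b| < 2 * a :=
  abs_lt_of_sq_lt_sq (by nlinarith) (by positivity)

lemma sq_sub_discriminant_form_eq (hc : c ≠ 0) (ht : t ^ 2 * (4 * a * c - b ^ 2) = c) :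
    (4 * a * t - b * x) ^ 2 - ((b ^ 2 - 4 * a * c) * x ^ 2 + 4 * a) =
      4 * a * (b * t - c * x) ^ 2 / c := by
  field_simp
  linear_combination 4 * a * ht

lemma sqrt_discriminant_form_le (ha : 0 ≤ a) (hc : 0 < c)
    (ht : t ^ 2 * (4 * a * c - b ^ 2) = c) (hx : |b * x| ≤ 4 * a * t) :
    √((b ^ 2 - 4 * a * c) * x ^ 2 + 4 * a) ≤ 4 * a * t - |b * x| := by
  have ht' : t ^ 2 * (4 * a * c - |b| ^ 2) = c := by rwa [sq_abs]
  have key := sq_sub_discriminant_form_eq (x := |x|) hc.ne' ht'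
  rw [sq_abs, sq_abs, ← abs_mul] at key
  rw [Real.sqrt_le_iff]
  refine ⟨by linarith, ?_⟩
  have : 0 ≤ 4 * a * (|b| * t - c * |x|) ^ 2 / c := by positivity
  linarith

lemma abs_branch_le (ha : 0 < a) (hc : 0 < c) (ht : t ^ 2 * (4 * a * c - b ^ 2) = c)
    {s : ℝ} (hs : |s| = 1) (hx : |b * x| ≤ 4 * a * t) :
    |(-b * x + s * √((b ^ 2 - 4 * a * c) * x ^ 2 + 4 * a)) / (2 * a)| ≤ 2 * t := by
  have hsqrt := sqrt_discriminant_form_le ha.le hc ht hx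
  have hnum : |-b * x + s * √((b ^ 2 - 4 * a * c) * x ^ 2 + 4 * a)| ≤ 4 * a * t :=
    calc _ ≤ |-b * x| + |s * √((b ^ 2 - 4 * a * c) * x ^ 2 + 4 * a)| := abs_add_le _ _
      _ = |b * x| + √((b ^ 2 - 4 * a * c) * x ^ 2 + 4 * a) := by
        rw [neg_mul, abs_neg, abs_mul s, hs, one_mul, abs_of_nonneg (Real.sqrt_nonneg _)]
      _ ≤ 4 * a * t := by linarith
  rw [abs_div, abs_of_pos (by positivity : (0 : ℝ) < 2 * a), div_le_iff₀ (by positivity)]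
  linarith

end EllipticBranch

theorem elliptic_invariant_interval (a b c : ℝ) (ha : a > 0)
    (hΔ : b ^ 2 - 4 * a * c < 0) (hc : 0 < c) (hca : c < a) :
    let Δ : ℝ := b ^ 2 - 4 * a * c
    let xstar : ℝ := 2 * Real.sqrt (c / |Δ|)
    ∀ s : ℝ, s = 1 ∨ s = -1 → ∀ x ∈ Set.Icc (-xstar) xstar,
      (-b * x + s * Real.sqrt (Δ * x ^ 2 + 4 * a)) / (2 * a) ∈ Set.Icc (-xstar) xstar := by
  intro Δ xstar s hs x hx
  set t := √(c / |Δ|)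
  have habs : |Δ| = 4 * a * c - b ^ 2 := by rw [abs_of_neg hΔ]; ring
  have ht : t ^ 2 * (4 * a * c - b ^ 2) = c := by
    rw [Real.sq_sqrt (by positivity), habs, div_mul_cancel₀ _ (by linarith)]
  have hb : |b| < 2 * a := abs_lt_two_mul_of_sq_lt ha.le hca.le (by linarith)
  have hx' : |x| ≤ 2 * t := abs_le.mpr hx
  have hbx : |b * x| ≤ 4 * a * t := by
    rw [abs_mul]
    nlinarith [abs_nonneg b, abs_nonneg x]
  have hs' : |s| = 1 := by rcases hs with rfl | rfl <;> simp
  exact abs_le.mp (abs_branch_le ha hc ht hs' hbx)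
end

section
/- In the hyperbolic case with a > 0 and Δ > 0, for every x with Δx² + 4a > 0, the derivative of each branch f_s satisfies m_- < f_s'(x) < m_+ where m_± = (-b ± √Δ)/(2a); hence if |m_±| < 1 then |f_s'(x)| < 1 for all such x. -/
/-! The derivative of a branch is `(-b + s Δ x / √(Δ x² + 4a)) / (2a)`, and since `4aΔ > 0` we have
`(Δ x)² < Δ (Δ x² + 4a)`, i.e. the slope correction `Δ x / √(Δ x² + 4a)` stays strictly inside
`(-√Δ, √Δ)`, which are exactly the offsets giving the asymptotic slopes `m_±`. -/

open Real

theorem hasDerivAt_sqrt_mul_sq_add {p q x : ℝ} (hx : p * x ^ 2 + q ≠ 0) :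
    HasDerivAt (fun y ↦ √(p * y ^ 2 + q)) (p * x / √(p * x ^ 2 + q)) x := by
  have hinner : HasDerivAt (fun y ↦ p * y ^ 2 + q) (p * (2 * x)) x := by
    simpa using ((hasDerivAt_pow 2 x).const_mul p).add_const q
  convert hinner.sqrt hx using 1
  field_simp

theorem abs_mul_div_sqrt_mul_sq_add_lt_sqrt {p q : ℝ} (hp : 0 < p) (hq : 0 < q) (x : ℝ) :
    |p * x / √(p * x ^ 2 + q)| < √p := by
  have hw : 0 < p * x ^ 2 + q := by positivity
  refine abs_lt_of_sq_lt_sq ?_ (sqrt_nonneg p)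
  rw [div_pow, sq_sqrt hw.le, sq_sqrt hp.le, div_lt_iff₀ hw]
  nlinarith [mul_pos hp hq]

theorem div_mem_Ioo_of_abs_lt {b d r t : ℝ} (hd : 0 < d) (ht : |t| < r) :
    (-b + t) / d ∈ Set.Ioo ((-b - r) / d) ((-b + r) / d) := by
  obtain ⟨hlo, hhi⟩ := abs_lt.mp ht
  exact ⟨div_lt_div_of_pos_right (by linarith) hd, div_lt_div_of_pos_right (by linarith) hd⟩

theorem hyperbolic_deriv_bounds (a b c : ℝ) (ha : a > 0)
    (hΔ : b ^ 2 - 4 * a * c > 0) (s : ℝ) (hs : s = 1 ∨ s = -1) :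
    let Δ : ℝ := b ^ 2 - 4 * a * c
    let mp : ℝ := (-b + Real.sqrt Δ) / (2 * a)
    let mm : ℝ := (-b - Real.sqrt Δ) / (2 * a)
    ∀ x : ℝ, Δ * x ^ 2 + 4 * a > 0 →
      (mm < deriv (fun y : ℝ => (-b * y + s * Real.sqrt (Δ * y ^ 2 + 4 * a)) / (2 * a)) x ∧
       deriv (fun y : ℝ => (-b * y + s * Real.sqrt (Δ * y ^ 2 + 4 * a)) / (2 * a)) x < mp) ∧
      (|mp| < 1 → |mm| < 1 →
        |deriv (fun y : ℝ => (-b * y + s * Real.sqrt (Δ * y ^ 2 + 4 * a)) / (2 * a)) x| < 1) := by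
  intro Δ mp mm x hx
  have hderiv : deriv (fun y ↦ (-b * y + s * √(Δ * y ^ 2 + 4 * a)) / (2 * a)) x
      = (-b + s * (Δ * x / √(Δ * x ^ 2 + 4 * a))) / (2 * a) := by
    have := (((hasDerivAt_id x).const_mul (-b)).add
      ((hasDerivAt_sqrt_mul_sq_add hx.ne').const_mul s)).div_const (2 * a)
    simpa using this.deriv
  have hs_abs : |s| = 1 := by rcases hs with rfl | rfl <;> simp
  have hslope : |s * (Δ * x / √(Δ * x ^ 2 + 4 * a))| < √Δ := by
    rw [abs_mul, hs_abs, one_mul]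
    exact abs_mul_div_sqrt_mul_sq_add_lt_sqrt hΔ (by positivity) x
  have hbounds := hderiv ▸ div_mem_Ioo_of_abs_lt (b := b) (by positivity) hslope
  refine ⟨hbounds, fun hmp hmm ↦ abs_lt.mpr ⟨?_, ?_⟩⟩
  · linarith [(abs_lt.mp hmm).1, hbounds.1]
  · linarith [(abs_lt.mp hmp).2, hbounds.2]
end

section
/- Let B ⊂ ℝ be a nonempty closed interval and f_+, f_- : B → B continuous maps each Lipschitz with constant L < 1. Then for every bi-infinite symbol sequence s : ℤ → {-1,+1} there exists a unique sequence ξ : ℤ → B such that ξ_t = f_{s_t}(ξ_{t-1}) for all t ∈ ℤ. -/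
/-!
Bi-infinite sequences in a bounded complete metric space `X`, with the sup distance, form a complete
metric space, on which `ξ ↦ (t ↦ f_t (ξ_{t-1}))` is a contraction with the common Lipschitz
constant of the `f_t`. Its unique fixed point (Banach) is the unique sequence obeying the
recursion; boundedness of `X` is what makes every such sequence a point of that space.
-/

open Set Function BoundedContinuousFunction NNReal

namespace BoundedContinuousFunction

variable {X : Type*} [MetricSpace X] [BoundedSpace X]

noncomputable def ofBoundedSpace (ξ : ℤ → X) : ℤ →ᵇ X :=
  mkOfDiscrete ξ (Metric.diam (univ : Set X)) fun _ _ =>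
    Metric.dist_le_diam_of_mem (Bornology.isBounded_univ.2 ‹_›) (mem_univ _) (mem_univ _)

noncomputable def shiftApply (f : ℤ → X → X) (ξ : ℤ →ᵇ X) : ℤ →ᵇ X :=
  ofBoundedSpace fun t => f t (ξ (t - 1))

theorem contractingWith_shiftApply {K : ℝ≥0} (hK : K < 1) {f : ℤ → X → X}
    (hf : ∀ t, LipschitzWith K (f t)) : ContractingWith K (shiftApply f) := by
  refine ⟨hK, LipschitzWith.of_dist_le_mul fun ξ η => ?_⟩
  refine (dist_le (by positivity)).2 fun t => ?_
  calc dist (f t (ξ (t - 1))) (f t (η (t - 1))) ≤ K * dist (ξ (t - 1)) (η (t - 1)) :=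
        (hf t).dist_le_mul _ _
    _ ≤ K * dist ξ η := by gcongr; exact dist_coe_le_dist _

end BoundedContinuousFunction

theorem existsUnique_orbit_of_lipschitzWith {X : Type*} [MetricSpace X] [BoundedSpace X]
    [Nonempty X] [CompleteSpace X] {K : ℝ≥0} (hK : K < 1) {f : ℤ → X → X}
    (hf : ∀ t, LipschitzWith K (f t)) : ∃! ξ : ℤ → X, ∀ t, ξ t = f t (ξ (t - 1)) := by
  have : Nonempty (ℤ →ᵇ X) := ⟨const ℤ (Classical.arbitrary X)⟩
  have hT := contractingWith_shiftApply hK hf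
  refine ⟨hT.fixedPoint, fun t => (DFunLike.congr_fun hT.fixedPoint_isFixedPt t).symm,
    fun η hη => ?_⟩
  have hfixed : IsFixedPt (shiftApply f) (ofBoundedSpace η) := by
    ext t; exact (hη t).symm
  exact congrArg DFunLike.coe (hT.fixedPoint_unique hfixed)

theorem lipschitzWith_mapsTo_restrict {s t : Set ℝ} {φ : ℝ → ℝ} {L : ℝ} (hφ : MapsTo φ s t)
    (hL : ∀ x ∈ s, ∀ y ∈ s, |φ x - φ y| ≤ L * |x - y|) :
    LipschitzWith L.toNNReal (hφ.restrict φ s t) := by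
  refine LipschitzWith.of_dist_le_mul fun x y => ?_
  simp only [Subtype.dist_eq, MapsTo.val_restrict_apply, Real.dist_eq, Real.coe_toNNReal']
  exact (hL x x.2 y y.2).trans (by gcongr; exact le_max_left _ _)

theorem ai_states_exist_unique_general (lo hi : ℝ) (hB : lo ≤ hi)
    (fp fm : ℝ → ℝ) (L : ℝ) (hL : L < 1)
    (hfp : ∀ x ∈ Set.Icc lo hi, fp x ∈ Set.Icc lo hi)
    (hfm : ∀ x ∈ Set.Icc lo hi, fm x ∈ Set.Icc lo hi)
    (hfpc : ∀ x ∈ Set.Icc lo hi, ∀ y ∈ Set.Icc lo hi, |fp x - fp y| ≤ L * |x - y|)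
    (hfmc : ∀ x ∈ Set.Icc lo hi, ∀ y ∈ Set.Icc lo hi, |fm x - fm y| ≤ L * |x - y|)
    (s : ℤ → ℝ) :
    ∃! ξ : ℤ → ℝ, (∀ t, ξ t ∈ Set.Icc lo hi) ∧
      ∀ t, ξ t = (if s t = 1 then fp else fm) (ξ (t - 1)) := by
  have : Nonempty (Icc lo hi) := (nonempty_Icc.2 hB).to_subtype
  set F : ℤ → ℝ → ℝ := fun t => if s t = 1 then fp else fm
  have hmaps (t : ℤ) : MapsTo (F t) (Icc lo hi) (Icc lo hi) := by
    simp only [F]; split <;> assumption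
  have hlip (t : ℤ) : LipschitzWith L.toNNReal ((hmaps t).restrict _ _ _) :=
    lipschitzWith_mapsTo_restrict (hmaps t) (by simp only [F]; split <;> assumption)
  obtain ⟨ζ, hζ, huniq⟩ := existsUnique_orbit_of_lipschitzWith (Real.toNNReal_lt_one.2 hL) hlip
  refine ⟨fun t => ζ t, ⟨fun t => (ζ t).2, fun t => congrArg Subtype.val (hζ t)⟩, ?_⟩
  rintro η ⟨hηB, hη⟩
  funext t
  exact congrArg Subtype.val (congrFun (huniq (fun t => ⟨η t, hηB t⟩) fun t => Subtype.ext (hη t)) t)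

theorem ai_states_exist_unique (lo hi : ℝ) (hB : lo ≤ hi)
    (fp fm : ℝ → ℝ) (L : ℝ) (hL : L < 1)
    (hfp : ∀ x ∈ Set.Icc lo hi, fp x ∈ Set.Icc lo hi)
    (hfm : ∀ x ∈ Set.Icc lo hi, fm x ∈ Set.Icc lo hi)
    (hfpc : ∀ x ∈ Set.Icc lo hi, ∀ y ∈ Set.Icc lo hi, |fp x - fp y| ≤ L * |x - y|)
    (hfmc : ∀ x ∈ Set.Icc lo hi, ∀ y ∈ Set.Icc lo hi, |fm x - fm y| ≤ L * |x - y|)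
    (s : ℤ → ℝ) (hs : ∀ t, s t = 1 ∨ s t = -1) :
    ∃! ξ : ℤ → ℝ, (∀ t, ξ t ∈ Set.Icc lo hi) ∧
      ∀ t, ξ t = (if s t = 1 then fp else fm) (ξ (t - 1)) :=
  ai_states_exist_unique_general lo hi hB fp fm L hL hfp hfm hfpc hfmc s
end
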